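/- arXiv:0810.4908 — 4 statements merged into one kernel-verified Lean document; each statement's English description precedes it below -/
import Mathlib

section
/- For integers 1 ≤ b ≤ p, the quantity W̄_{b,p} := b + (p−b)·log(1 − b/p) satisfies b²/(2p) ≤ W̄_{b,p} ≤ b²/p, and moreover W̄_{b,p} ≤ E[W_{b,p}] ≤ b/p + W̄_{b,p}, where E[W_{b,p}] = Σ_{i=0}^{b-1} (b−i)/(p−i). -/
open Finset

lemma my_key1 (u : ℝ) (h0 : 0 < u) (h1 : u ≤ 1) : (u ^ 2 - 1) / 2 ≤ u * Real.log u := by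
  have hanti : AntitoneOn (fun x : ℝ => x * Real.log x - (x ^ 2 - 1) / 2) (Set.Ioi 0) := by
    apply antitoneOn_of_deriv_nonpos (convex_Ioi 0)
    · exact (Real.continuous_mul_log.sub (by continuity)).continuousOn
    · intro x hx
      rw [interior_Ioi] at hx
      exact ((Real.hasDerivAt_mul_log hx.ne').sub
        (((hasDerivAt_pow 2 x).sub_const 1).div_const 2)).differentiableAt.differentiableWithinAt
    · intro x hx
      rw [interior_Ioi] at hx
      have hd : HasDerivAt (fun x : ℝ => x * Real.log x - (x ^ 2 - 1) / 2)
          (Real.log x + 1 - (2 * x ^ 1) / 2) x :=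
        (Real.hasDerivAt_mul_log hx.ne').sub
          (((hasDerivAt_pow 2 x).sub_const 1).div_const 2)
      rw [hd.deriv]
      have := Real.log_le_sub_one_of_pos hx
      simp only [pow_one]
      linarith
  have h := hanti (Set.mem_Ioi.2 h0) (Set.mem_Ioi.2 one_pos) h1
  simp only [Real.log_one, mul_one, one_pow, sub_self, zero_div, mul_zero, sub_zero] at h
  linarith

lemma my_key2 (u : ℝ) (h0 : 0 < u) : u * Real.log u ≤ u ^ 2 - u := by
  have := Real.log_le_sub_one_of_pos h0
  nlinarith

lemma my_tele (f : ℕ → ℝ) (m : ℕ) : ∀ p, m ≤ p →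
    ∑ k ∈ Finset.Ico m p, (f (k + 1) - f k) = f p - f m := by
  intro p
  induction p with
  | zero => intro h; interval_cases m; simp
  | succ n ih =>
    intro h
    rcases Nat.lt_or_ge m (n + 1) with hlt | hge
    · have hmn : m ≤ n := by omega
      rw [Finset.sum_Ico_succ_top hmn, ih hmn]; ring
    · have : m = n + 1 := by omega
      subst this; simp

lemma my_log_succ (n : ℕ) (hn : 1 ≤ n) :
    1 / ((n : ℝ) + 1) ≤ Real.log ((n : ℝ) + 1) - Real.log n ∧
      Real.log ((n : ℝ) + 1) - Real.log n ≤ 1 / n := by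
  have hx : (0 : ℝ) < n := by exact_mod_cast hn
  have hx1 : (0 : ℝ) < (n : ℝ) + 1 := by linarith
  have hdiv : Real.log (((n : ℝ) + 1) / n) = Real.log ((n : ℝ) + 1) - Real.log n :=
    Real.log_div hx1.ne' hx.ne'
  have hdiv2 : Real.log ((n : ℝ) / ((n : ℝ) + 1)) = Real.log n - Real.log ((n : ℝ) + 1) :=
    Real.log_div hx.ne' hx1.ne'
  constructor
  · have h := Real.log_le_sub_one_of_pos (show (0:ℝ) < (n : ℝ) / ((n : ℝ) + 1) by positivity)
    rw [hdiv2] at h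
    have e : (n : ℝ) / ((n : ℝ) + 1) - 1 = -(1 / ((n : ℝ) + 1)) := by field_simp; ring
    rw [e] at h; linarith
  · have h := Real.log_le_sub_one_of_pos (show (0:ℝ) < ((n : ℝ) + 1) / n by positivity)
    rw [hdiv] at h
    have e : ((n : ℝ) + 1) / n - 1 = 1 / n := by field_simp; ring
    rw [e] at h; linarith

/-- For `1 ≤ b ≤ p`, the quantity `W̄_{b,p} = b + (p−b)·log(1−b/p)` satisfies
`b²/(2p) ≤ W̄ ≤ b²/p`, and `W̄ ≤ E[W_{b,p}] ≤ b/p + W̄`, where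
`E[W_{b,p}] = Σ_{i=0}^{b-1} (b−i)/(p−i)`.  (When `b = p`, the convention
`Real.log 0 = 0` makes the term `(p−b)·log(1−b/p)` vanish, as intended.) -/
theorem wbar_bounds (b p : ℕ) (hb : 1 ≤ b) (hbp : b ≤ p) :
    (b : ℝ) ^ 2 / (2 * p) ≤ (b : ℝ) + ((p : ℝ) - b) * Real.log (1 - (b : ℝ) / p) ∧
    (b : ℝ) + ((p : ℝ) - b) * Real.log (1 - (b : ℝ) / p) ≤ (b : ℝ) ^ 2 / p ∧
    (b : ℝ) + ((p : ℝ) - b) * Real.log (1 - (b : ℝ) / p)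
      ≤ ∑ i ∈ Finset.range b, ((b : ℝ) - i) / ((p : ℝ) - i) ∧
    (∑ i ∈ Finset.range b, ((b : ℝ) - i) / ((p : ℝ) - i))
      ≤ (b : ℝ) / p + ((b : ℝ) + ((p : ℝ) - b) * Real.log (1 - (b : ℝ) / p)) := by
  have hp1 : 1 ≤ p := hb.trans hbp
  have hp0 : (0 : ℝ) < p := by exact_mod_cast hp1
  rcases eq_or_lt_of_le hbp with heq | hlt
  · -- case b = p
    subst heq
    have h1 : (1 : ℝ) - (b : ℝ) / b = 0 := by
      rw [div_self hp0.ne']; ring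
    have hsum : (∑ i ∈ Finset.range b, ((b : ℝ) - i) / ((b : ℝ) - i)) = b := by
      have hterm : ∀ i ∈ Finset.range b, ((b : ℝ) - i) / ((b : ℝ) - i) = 1 := by
        intro i hi
        have : (i : ℝ) < b := by exact_mod_cast Finset.mem_range.1 hi
        exact div_self (sub_ne_zero.2 this.ne')
      rw [Finset.sum_congr rfl hterm, Finset.sum_const, Finset.card_range, nsmul_eq_mul, mul_one]
    rw [h1, hsum, Real.log_zero, mul_zero, add_zero]
    have e : (b : ℝ) ^ 2 / (2 * b) = b / 2 := by
      field_simp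
    have e2 : (b : ℝ) ^ 2 / b = b := by
      field_simp
    have e3 : (0:ℝ) < (b:ℝ)/b := by positivity
    exact ⟨by rw [e]; linarith, by rw [e2], le_refl _, by linarith⟩
  · -- case b < p
    set m := p - b with hmdef
    have hm1 : 1 ≤ m := by omega
    have hmbp : m + b = p := by omega
    have hmlt : m < p := by omega
    have hmR : (m : ℝ) = (p : ℝ) - b := by
      have : ((m : ℕ) : ℝ) + b = p := by exact_mod_cast congrArg (Nat.cast : ℕ → ℝ) hmbp
      linarith
    have hm0 : (0 : ℝ) < m := by exact_mod_cast hm1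
    have hlq : (1 : ℝ) - (b : ℝ) / p = (m : ℝ) / p := by
      rw [hmR]; field_simp
    have hpm : p - m = b := by omega
    -- rewrite the sum
    have hsum : (∑ i ∈ Finset.range b, ((b : ℝ) - i) / ((p : ℝ) - i))
        = ∑ j ∈ Finset.range b, ((j : ℝ) + 1) / ((m : ℝ) + j + 1) := by
      rw [← Finset.sum_range_reflect]
      apply Finset.sum_congr rfl
      intro j hj
      have hj' : j < b := Finset.mem_range.1 hj
      have hc : ((b - 1 - j : ℕ) : ℝ) = (b : ℝ) - 1 - j := by
        have h' : b - 1 - j = b - (1 + j) := by omega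
        rw [h', Nat.cast_sub (by omega)]; push_cast; ring
      rw [hc]
      have en : (b : ℝ) - ((b : ℝ) - 1 - j) = (j : ℝ) + 1 := by ring
      have ed : (p : ℝ) - ((b : ℝ) - 1 - j) = (m : ℝ) + j + 1 := by rw [hmR]; ring
      rw [en, ed]
    have hSS : (∑ i ∈ Finset.range b, ((b : ℝ) - i) / ((p : ℝ) - i))
        = (b : ℝ) - m * ∑ j ∈ Finset.range b, 1 / ((m : ℝ) + j + 1) := by
      rw [hsum]
      have hterm : ∀ j ∈ Finset.range b,
          ((j : ℝ) + 1) / ((m : ℝ) + j + 1) = 1 - (m : ℝ) * (1 / ((m : ℝ) + j + 1)) := by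
        intro j hj
        have hpos : (0 : ℝ) < (m : ℝ) + j + 1 := by positivity
        field_simp
        ring
      rw [Finset.sum_congr rfl hterm, Finset.sum_sub_distrib, Finset.sum_const,
        Finset.card_range, nsmul_eq_mul, mul_one, ← Finset.mul_sum]
    -- telescoping log sum
    have hlogsum : Real.log p - Real.log m
        = ∑ j ∈ Finset.range b, (Real.log ((m : ℝ) + j + 1) - Real.log ((m : ℝ) + j)) := by
      have ht := my_tele (fun k => Real.log k) m p hmlt.le
      rw [Finset.sum_Ico_eq_sum_range, hpm] at ht
      rw [← ht]
      apply Finset.sum_congr rfl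
      intro j hj
      push_cast
      ring_nf
    have hlow : (∑ j ∈ Finset.range b, 1 / ((m : ℝ) + j + 1)) ≤ Real.log p - Real.log m := by
      rw [hlogsum]
      apply Finset.sum_le_sum
      intro j hj
      have h := (my_log_succ (m + j) (by omega)).1
      push_cast at h
      convert h using 3
    have hup : Real.log p - Real.log m ≤ ∑ j ∈ Finset.range b, 1 / ((m : ℝ) + j) := by
      rw [hlogsum]
      apply Finset.sum_le_sum
      intro j hj
      have h := (my_log_succ (m + j) (by omega)).2
      push_cast at h
      convert h using 3
    have hdiff : (∑ j ∈ Finset.range b, 1 / ((m : ℝ) + j))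
        - (∑ j ∈ Finset.range b, 1 / ((m : ℝ) + j + 1)) = 1 / (m : ℝ) - 1 / p := by
      have ht := my_tele (fun k => 1 / (k : ℝ)) m p hmlt.le
      rw [Finset.sum_Ico_eq_sum_range, hpm] at ht
      have h2 : (∑ j ∈ Finset.range b, (1 / ((m : ℝ) + j + 1) - 1 / ((m : ℝ) + j)))
          = 1 / (p : ℝ) - 1 / m := by
        rw [← ht]
        apply Finset.sum_congr rfl
        intro j hj
        push_cast
        ring_nf
      rw [Finset.sum_sub_distrib] at h2
      linarith
    have hlogdiv : Real.log ((m : ℝ) / p) = Real.log m - Real.log p :=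
      Real.log_div hm0.ne' hp0.ne'
    rw [hlq, ← hmR]
    have hu0 : (0 : ℝ) < (m : ℝ) / p := by positivity
    have hu1 : (m : ℝ) / p ≤ 1 := by
      rw [div_le_one hp0]; exact_mod_cast hmlt.le
    refine ⟨?_, ?_, ?_, ?_⟩
    · -- lower quadratic bound
      have hk1 := mul_le_mul_of_nonneg_left (my_key1 _ hu0 hu1) hp0.le
      have e1 : (p : ℝ) * ((((m : ℝ) / p) ^ 2 - 1) / 2) = ((m : ℝ) ^ 2 / p - p) / 2 := by
        field_simp
      have e2 : (p : ℝ) * ((m : ℝ) / p * Real.log ((m : ℝ) / p))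
          = (m : ℝ) * Real.log ((m : ℝ) / p) := by
        field_simp
      have e3 : (b : ℝ) + ((m : ℝ) ^ 2 / p - p) / 2 = (b : ℝ) ^ 2 / (2 * p) := by
        rw [hmR]; field_simp; ring
      linarith
    · -- upper quadratic bound
      have hk2 := mul_le_mul_of_nonneg_left (my_key2 _ hu0) hp0.le
      have e2 : (p : ℝ) * ((m : ℝ) / p * Real.log ((m : ℝ) / p))
          = (m : ℝ) * Real.log ((m : ℝ) / p) := by
        field_simp
      have e4 : (p : ℝ) * (((m : ℝ) / p) ^ 2 - (m : ℝ) / p) = (m : ℝ) ^ 2 / p - m := by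
        field_simp
      have e5 : (b : ℝ) + ((m : ℝ) ^ 2 / p - m) = (b : ℝ) ^ 2 / p := by
        rw [hmR]; field_simp; ring
      linarith
    · -- W̄ ≤ sum
      rw [hSS, hlogdiv]
      have hA := mul_le_mul_of_nonneg_left hlow (Nat.cast_nonneg m : (0 : ℝ) ≤ m)
      linarith
    · -- sum ≤ b/p + W̄
      rw [hSS, hlogdiv]
      have hB := mul_le_mul_of_nonneg_left hup (Nat.cast_nonneg m : (0 : ℝ) ≤ m)
      have hC : (m : ℝ) * ((∑ j ∈ Finset.range b, 1 / ((m : ℝ) + j))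
          - (∑ j ∈ Finset.range b, 1 / ((m : ℝ) + j + 1))) = (m : ℝ) * (1 / (m : ℝ) - 1 / p) := by
        rw [hdiff]
      have hD : (m : ℝ) * (1 / (m : ℝ) - 1 / p) = 1 - (m : ℝ) / p := by
        field_simp
      have hE : (b : ℝ) / p = 1 - (m : ℝ) / p := by
        rw [hmR]; field_simp; ring
      rw [mul_sub] at hC
      linarith
end

section
/- Let k ≥ 1, c > 0, n > 0, L > 0. Define ℓ_0 = 1, ℓ_k = L, and for 0 < i < k, ℓ_i = 2^i · (L√c / 2^k)^{1 − (2^{k−i}−1)/(2^k−1)}. Then this sequence satisfies the recursions 2ℓ_i³ = ℓ_{i−1}ℓ_{i+1}² for 1 ≤ i ≤ k−2 and 2ℓ_{k−1}³ = c·ℓ_{k−2}ℓ_k² (when k ≥ 2), and the value f_{n,c}(ℓ) = Σ_{i=1}^{k−1} ℓ_i²/(2nℓ_{i−1}) + c·ℓ_k²/(2nℓ_{k−1}) equals (2L√c/n)·(1 − 2^{−k})·(L√c/2^k)^{1/(2^k−1)}. -/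
private lemma sum_pow_two_Icc (m : ℕ) :
    (∑ i ∈ Finset.Icc 1 m, (2 : ℝ) ^ i) = 2 ^ (m + 1) - 2 := by
  induction m with
  | zero => simp
  | succ m ih =>
      rw [Finset.sum_Icc_succ_top (by omega : 1 ≤ m + 1), ih]
      ring

/-- The explicit sequence `ℓ_0 = 1`, `ℓ_k = L`,
`ℓ_i = 2^i (L√c/2^k)^{1 − (2^{k−i}−1)/(2^k−1)}` for `0 < i < k`, satisfies the
optimality recursions `2ℓ_i³ = ℓ_{i−1}ℓ_{i+1}²` (for `1 ≤ i ≤ k−2`) and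
`2ℓ_{k−1}³ = c ℓ_{k−2} ℓ_k²` (for `k ≥ 2`), and the cost
`f_{n,c}(ℓ)` equals `(2L√c/n)(1 − 2^{−k})(L√c/2^k)^{1/(2^k−1)}`. -/
theorem greedy_sequence_recursion_and_value (k : ℕ) (hk : 1 ≤ k)
    (c n L : ℝ) (hc : 0 < c) (hn : 0 < n) (hL : 0 < L)
    (ℓ : ℕ → ℝ)
    (h0 : ℓ 0 = 1) (hkk : ℓ k = L)
    (hmid : ∀ i, 0 < i → i < k →
      ℓ i = 2 ^ i *
        (L * Real.sqrt c / 2 ^ k) ^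
          ((1 : ℝ) - (((2 : ℝ) ^ (k - i) - 1) / ((2 : ℝ) ^ k - 1)))) :
    (∀ i, 1 ≤ i → i ≤ k - 2 →
      2 * (ℓ i) ^ 3 = ℓ (i - 1) * (ℓ (i + 1)) ^ 2) ∧
    (2 ≤ k → 2 * (ℓ (k - 1)) ^ 3 = c * ℓ (k - 2) * (ℓ k) ^ 2) ∧
    (∑ i ∈ Finset.Icc 1 (k - 1), (ℓ i) ^ 2 / (2 * n * ℓ (i - 1)))
        + c * (ℓ k) ^ 2 / (2 * n * ℓ (k - 1))
      = (2 * L * Real.sqrt c / n) * (1 - ((2 : ℝ) ^ k)⁻¹) *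
          (L * Real.sqrt c / 2 ^ k) ^ ((1 : ℝ) / ((2 : ℝ) ^ k - 1)) := by
  have hsc : 0 < Real.sqrt c := Real.sqrt_pos.mpr hc
  set A : ℝ := L * Real.sqrt c / 2 ^ k with hAdef
  have hA : 0 < A := by positivity
  set D : ℝ := (2 : ℝ) ^ k - 1 with hDdef
  have hD : 0 < D := by
    have : (2 : ℝ) ^ 1 ≤ (2 : ℝ) ^ k := pow_le_pow_right₀ (by norm_num) hk
    simp only [hDdef]; nlinarith
  set e : ℕ → ℝ := fun m => 1 - ((2 : ℝ) ^ k / 2 ^ m - 1) / D with hedef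
  set G : ℕ → ℝ := fun m => 2 ^ m * A ^ (e m) with hGdef
  have hGpos : ∀ m, 0 < G m := fun m => by
    have := Real.rpow_pos_of_pos hA (e m); simp only [hGdef]; positivity
  -- ℓ agrees with G below k
  have hG1 : ∀ i, i < k → ℓ i = G i := by
    intro i hi
    rcases Nat.eq_zero_or_pos i with h | h
    · subst h
      have he0 : e 0 = 0 := by
        simp only [hedef, pow_zero, div_one, hDdef]
        rw [div_self (show (2:ℝ)^k - 1 ≠ 0 from hD.ne'), sub_self]
      simp [hGdef, he0, h0]
    · rw [hmid i h hi, hGdef]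
      have : (2 : ℝ) ^ (k - i) = (2 : ℝ) ^ k / 2 ^ i :=
        pow_sub₀ (2 : ℝ) (by norm_num) hi.le
      rw [this]
  have hGk : G k = L * Real.sqrt c := by
    have hek : e k = 1 := by
      simp only [hedef]
      rw [div_self (by positivity : ((2:ℝ)^k) ≠ 0)]
      simp
    simp only [hGdef, hek, Real.rpow_one, hAdef]
    field_simp
  -- the recursion for G
  have hrec : ∀ j : ℕ, 2 * (G (j + 1)) ^ 3 = G j * (G (j + 2)) ^ 2 := by
    intro j
    have hx : ((2 : ℝ) ^ j) ≠ 0 := by positivity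
    have hee : e (j + 1) * 3 = e j + e (j + 2) * 2 := by
      simp only [hedef, pow_succ]
      field_simp
      ring
    have hcube : ∀ m (p : ℕ), (G m) ^ p = 2 ^ (m * p) * A ^ (e m * p) := by
      intro m p
      simp only [hGdef, mul_pow, ← pow_mul]
      rw [← Real.rpow_natCast (A ^ e m) p, ← Real.rpow_mul hA.le]
    rw [hcube (j+1) 3, hcube (j+2) 2, hGdef]
    push_cast
    rw [show (2:ℝ)^j * A ^ e j * ((2:ℝ)^((j+2)*2) * A ^ (e (j+2) * 2))
        = ((2:ℝ)^j * 2^((j+2)*2)) * (A ^ e j * A ^ (e (j+2) * 2)) by ring,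
      ← Real.rpow_add hA, ← hee]
    ring
  -- the term formula
  have hterm : ∀ j : ℕ, (G (j + 1)) ^ 2 / (2 * n * G j)
      = 2 ^ (j + 1) * (A ^ ((1:ℝ) + 1 / D) / n) := by
    intro j
    have hx : ((2 : ℝ) ^ j) ≠ 0 := by positivity
    have hee : e (j + 1) * 2 = ((1:ℝ) + 1 / D) + e j := by
      simp only [hedef, pow_succ]
      field_simp
      ring
    have hsq : (G (j+1)) ^ 2 = 2 ^ ((j+1) * 2) * A ^ (e (j+1) * 2) := by
      simp only [hGdef, mul_pow, ← pow_mul]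
      rw [← Real.rpow_natCast (A ^ e (j+1)) 2, ← Real.rpow_mul hA.le]
      norm_num
    rw [hsq, hee, Real.rpow_add hA, div_eq_iff (by have := hGpos j; positivity)]
    simp only [hGdef]
    field_simp
    ring
  refine ⟨?_, ?_, ?_⟩
  · intro i hi1 hi2
    have hk3 : 3 ≤ k := by omega
    obtain ⟨j, rfl⟩ : ∃ j, i = j + 1 := ⟨i - 1, by omega⟩
    rw [hG1 _ (by omega), hG1 _ (by omega), hG1 _ (by omega)]
    simpa using hrec j
  · intro hk2
    have h1 : 2 * (G (k - 1)) ^ 3 = G (k - 2) * (G k) ^ 2 := by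
      have := hrec (k - 2)
      rw [show k - 2 + 1 = k - 1 by omega, show k - 2 + 2 = k by omega] at this
      exact this
    rw [hG1 (k-1) (by omega), hG1 (k-2) (by omega), hkk]
    rw [h1, hGk]
    have hsq2 : Real.sqrt c ^ 2 = c := Real.sq_sqrt hc.le
    rw [mul_pow, hsq2]
    ring
  · -- the sum
    have hsum1 : (∑ i ∈ Finset.Icc 1 (k - 1), (ℓ i) ^ 2 / (2 * n * ℓ (i - 1)))
        = ∑ i ∈ Finset.Icc 1 (k - 1), (G i) ^ 2 / (2 * n * G (i - 1)) := by
      refine Finset.sum_congr rfl fun i hi => ?_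
      simp only [Finset.mem_Icc] at hi
      rw [hG1 _ (by omega), hG1 _ (by omega)]
    have hlast : c * (ℓ k) ^ 2 / (2 * n * ℓ (k - 1))
        = (G k) ^ 2 / (2 * n * G (k - 1)) := by
      rw [hG1 (k-1) (by omega), hkk, hGk]
      have hsq2 : Real.sqrt c ^ 2 = c := Real.sq_sqrt hc.le
      rw [mul_pow, hsq2]
      ring
    rw [hsum1, hlast, show (G k) ^ 2 / (2 * n * G (k - 1))
        = ∑ i ∈ Finset.Icc k k, (G i) ^ 2 / (2 * n * G (i - 1)) by
        rw [Finset.Icc_self, Finset.sum_singleton],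
      ← Finset.sum_union (by
        simp only [Finset.disjoint_left, Finset.mem_Icc]
        omega),
      show Finset.Icc 1 (k - 1) ∪ Finset.Icc k k = Finset.Icc 1 k by
        ext x; simp only [Finset.mem_union, Finset.mem_Icc]; omega]
    have hsum2 : (∑ i ∈ Finset.Icc 1 k, (G i) ^ 2 / (2 * n * G (i - 1)))
        = ∑ i ∈ Finset.Icc 1 k, (2:ℝ) ^ i * (A ^ ((1:ℝ) + 1 / D) / n) := by
      refine Finset.sum_congr rfl fun i hi => ?_
      simp only [Finset.mem_Icc] at hi
      obtain ⟨j, rfl⟩ : ∃ j, i = j + 1 := ⟨i - 1, by omega⟩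
      simpa using hterm j
    rw [hsum2, ← Finset.sum_mul, sum_pow_two_Icc k]
    rw [Real.rpow_add hA, Real.rpow_one]
    have h2k : ((2:ℝ) ^ k) ≠ 0 := by positivity
    simp only [hAdef]
    field_simp
    ring
end

section
/- In the complete graph K_n with i.i.d. Exp(1) edge weights, let F(a,b) be the minimum, over disjoint vertex sets A of size a and B of size b, of the minimal total weight needed to connect each vertex of B to some vertex of A by an edge. Then for any δ > 0 and integers 1 ≤ a ≤ n, 1 ≤ b ≤ n − a: Pr[F(a,b) < (1−δ)·b²/(2na)] ≤ exp(a·log(ne/a) − δ²b/8). -/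
set_option maxHeartbeats 1000000

open MeasureTheory ProbabilityTheory Real

lemma my_log_lb {δ : ℝ} (h0 : 0 ≤ δ) (h1 : δ ≤ 1) : δ / 2 ≤ Real.log (1 + δ) := by
  rw [Real.le_log_iff_exp_le (by linarith)]
  have hE : rexp (δ/2) * rexp (-(δ/2)) = 1 := by rw [← Real.exp_add]; simp
  have h := Real.add_one_le_exp (-(δ/2))
  nlinarith [mul_le_mul_of_nonneg_left h (Real.exp_pos (δ/2)).le, Real.exp_pos (δ/2)]

lemma my_h_lb {δ : ℝ} (h0 : 0 ≤ δ) (h1 : δ ≤ 1) :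
    δ ^ 2 / 4 ≤ (1 + δ) * Real.log (1 + δ) - δ := by
  have key : (∫ x in (1 : ℝ)..(1 + δ), (x - 1) / 2) ≤ ∫ x in (1:ℝ)..(1+δ), Real.log x := by
    apply intervalIntegral.integral_mono_on (by linarith)
    · exact ((continuous_id.sub continuous_const).div_const 2).intervalIntegrable _ _
    · apply ContinuousOn.intervalIntegrable
      apply Real.continuousOn_log.mono
      intro x hx
      simp only [Set.uIcc_of_le (by linarith : (1:ℝ) ≤ 1 + δ)] at hx
      simp only [Set.mem_compl_iff, Set.mem_singleton_iff]
      intro h; rw [h] at hx; exact absurd hx.1 (by norm_num)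
    · intro x hx
      have hx1 : 1 ≤ x := hx.1
      have hx2 : x ≤ 1 + δ := hx.2
      have := my_log_lb (δ := x - 1) (by linarith) (by linarith)
      calc (x-1)/2 ≤ Real.log (1 + (x-1)) := this
        _ = Real.log x := by ring_nf
  have h2 : (∫ x in (1 : ℝ)..(1 + δ), (x - 1) / 2) = δ^2/4 := by
    have e1 : (∫ x in (1 : ℝ)..(1 + δ), (x - 1) / 2)
        = ∫ x in (1 : ℝ)..(1 + δ), (x / 2 - 1/2) := by
      congr 1; ext x; ring
    have hf : IntervalIntegrable (fun x : ℝ => x / 2) volume 1 (1+δ) := by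
      apply Continuous.intervalIntegrable; fun_prop
    have hg : IntervalIntegrable (fun _ : ℝ => (1:ℝ)/2) volume 1 (1+δ) := by
      apply Continuous.intervalIntegrable; fun_prop
    rw [e1, intervalIntegral.integral_sub hf hg, intervalIntegral.integral_div,
      integral_id, intervalIntegral.integral_const]
    simp only [smul_eq_mul]
    ring
  have h3 : (∫ x in (1:ℝ)..(1+δ), Real.log x) = (1+δ) * Real.log (1+δ) - δ := by
    rw [integral_log]
    simp [Real.log_one]; ring
  linarith [key, h2 ▸ key, h3 ▸ key]

lemma my_choose_bound' (n a : ℕ) (ha : 1 ≤ a) (han : a ≤ n) :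
    (n.choose a : ℝ) ≤ ((n : ℝ) * Real.exp 1 / a) ^ a := by
  have ha' : (0:ℝ) < a := by exact_mod_cast ha
  have h1 : (n.choose a : ℝ) ≤ (n:ℝ)^a / (a.factorial : ℝ) := Nat.choose_le_pow_div a n
  have h2 : (a:ℝ)^a / (a.factorial:ℝ) ≤ Real.exp a := Real.pow_div_factorial_le_exp _ ha'.le a
  have hfac : (0:ℝ) < (a.factorial : ℝ) := by exact_mod_cast a.factorial_pos
  have h3 : (n:ℝ)^a / (a.factorial:ℝ) ≤ ((n:ℝ) * Real.exp 1 / a) ^ a := by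
    rw [div_pow, mul_pow, Real.exp_one_pow]
    rw [div_le_div_iff₀ hfac (by positivity)]
    calc (n:ℝ)^a * (a:ℝ)^a ≤ (n:ℝ)^a * (Real.exp a * a.factorial) := by
          apply mul_le_mul_of_nonneg_left _ (by positivity)
          rw [div_le_iff₀ hfac] at h2; linarith
      _ = (n:ℝ)^a * Real.exp a * a.factorial := by ring
  linarith

lemma my_choose_bound (n a : ℕ) (ha : 1 ≤ a) (han : a ≤ n) :
    (n.choose a : ℝ) ≤ Real.exp (a * Real.log (n * Real.exp 1 / a)) := by
  have ha' : (0:ℝ) < a := by exact_mod_cast ha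
  have hn : (0:ℝ) < n := lt_of_lt_of_le ha' (by exact_mod_cast han)
  have hx : (0:ℝ) < n * Real.exp 1 / a := by positivity
  have : Real.exp ((a : ℝ) * Real.log (n * Real.exp 1 / a))
      = ((n:ℝ) * Real.exp 1 / a) ^ a := by
    rw [mul_comm, Real.exp_mul, Real.exp_log hx, Real.rpow_natCast]
  rw [this]
  exact my_choose_bound' n a ha han

lemma my_exp_convex {x c θ : ℝ} (hc : 0 < c) (hx0 : 0 ≤ x) (hxc : x ≤ c) :
    Real.exp (θ * x) ≤ 1 + (x / c) * (Real.exp (θ * c) - 1) := by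
  have ht : x / c ∈ Set.Icc (0:ℝ) 1 := ⟨by positivity, by rw [div_le_one hc]; exact hxc⟩
  have h := convexOn_exp.2 (Set.mem_univ (0:ℝ)) (Set.mem_univ (θ * c))
    (by linarith [ht.2] : 0 ≤ 1 - x/c) ht.1 (by ring)
  have harg : (1 - x/c) • (0:ℝ) + (x/c) • (θ * c) = θ * x := by
    rw [smul_eq_mul, smul_eq_mul, mul_zero, zero_add, div_mul_eq_mul_div, div_eq_iff hc.ne']; ring
  rw [harg] at h
  calc Real.exp (θ * x) ≤ (1 - x/c) • Real.exp 0 + (x/c) • Real.exp (θ * c) := h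
    _ = 1 + (x / c) * (Real.exp (θ * c) - 1) := by
        simp only [smul_eq_mul, Real.exp_zero, mul_one]; ring

lemma my_integral_bound {s : ℝ} (hs : 0 < s) :
    ∫ u, max 0 (min s (s - u)) ∂(expMeasure 1) ≤ s ^ 2 / 2 := by
  set f : ℝ → ℝ := fun u => max 0 (min s (s - u)) with hf
  have hf_cont : Continuous f := by fun_prop
  have hf_nonneg : ∀ u, 0 ≤ f u := fun u => le_max_left _ _
  have h1 : ∫ u, f u ∂(expMeasure 1)
      = (∫⁻ u, ENNReal.ofReal (f u) ∂(expMeasure 1)).toReal := by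
    rw [integral_eq_lintegral_of_nonneg_ae (Filter.Eventually.of_forall hf_nonneg)
      hf_cont.aestronglyMeasurable]
  have h2 : (∫⁻ u, ENNReal.ofReal (f u) ∂(expMeasure 1))
      = ∫⁻ u, exponentialPDF 1 u * ENNReal.ofReal (f u) := by
    rw [expMeasure, gammaMeasure]
    rw [lintegral_withDensity_eq_lintegral_mul _
      (show Measurable (gammaPDF 1 1) from (measurable_gammaPDFReal 1 1).ennreal_ofReal)
      (hf_cont.measurable.ennreal_ofReal)]
    rfl
  have h3 : ∀ u, exponentialPDF 1 u * ENNReal.ofReal (f u)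
      ≤ (Set.Icc 0 s).indicator (fun u => ENNReal.ofReal (s - u)) u := by
    intro u
    rcases lt_or_ge u 0 with hu | hu
    · rw [exponentialPDF_of_neg hu, zero_mul]; exact zero_le
    rcases le_or_gt u s with hus | hus
    · have hmem : u ∈ Set.Icc 0 s := ⟨hu, hus⟩
      rw [Set.indicator_of_mem hmem]
      have hfu : f u = s - u := by
        rw [hf]; simp only []
        rw [min_eq_right (by linarith), max_eq_right (by linarith)]
      rw [hfu, exponentialPDF_of_nonneg hu]
      calc ENNReal.ofReal (1 * rexp (-(1*u))) * ENNReal.ofReal (s - u)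
          ≤ 1 * ENNReal.ofReal (s - u) := by
            apply mul_le_mul_left
            rw [ENNReal.ofReal_le_one]
            rw [one_mul]
            exact Real.exp_le_one_iff.mpr (by linarith)
        _ = ENNReal.ofReal (s - u) := one_mul _
    · have hfu : f u = 0 := by
        rw [hf]; simp only []
        rw [min_eq_right (by linarith), max_eq_left (by linarith)]
      rw [hfu, ENNReal.ofReal_zero, mul_zero]
      exact zero_le
  have h4 : (∫⁻ u, (Set.Icc 0 s).indicator (fun u => ENNReal.ofReal (s - u)) u)
      = ∫⁻ u in Set.Icc 0 s, ENNReal.ofReal (s - u) := by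
    rw [lintegral_indicator measurableSet_Icc]
  have h5 : (∫⁻ u in Set.Icc 0 s, ENNReal.ofReal (s - u)) = ENNReal.ofReal (s^2/2) := by
    rw [← ofReal_integral_eq_lintegral_ofReal]
    · congr 1
      rw [MeasureTheory.integral_Icc_eq_integral_Ioc,
        ← intervalIntegral.integral_of_le hs.le]
      have hf1 : IntervalIntegrable (fun _ : ℝ => s) volume 0 s := by
        apply Continuous.intervalIntegrable; fun_prop
      have hf2 : IntervalIntegrable (fun x : ℝ => x) volume 0 s := by
        apply Continuous.intervalIntegrable; fun_prop
      rw [intervalIntegral.integral_sub hf1 hf2, intervalIntegral.integral_const,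
        integral_id]
      simp only [smul_eq_mul]
      ring
    · apply ContinuousOn.integrableOn_compact isCompact_Icc
      fun_prop
    · filter_upwards [self_mem_ae_restrict measurableSet_Icc] with u hu
      simp only [Pi.zero_apply]
      linarith [hu.2]
  calc ∫ u, f u ∂(expMeasure 1)
      = (∫⁻ u, ENNReal.ofReal (f u) ∂(expMeasure 1)).toReal := h1
    _ ≤ (ENNReal.ofReal (s^2/2)).toReal := by
        apply ENNReal.toReal_mono ENNReal.ofReal_ne_top
        rw [h2, ← h5, ← h4]
        exact lintegral_mono h3
    _ = s^2/2 := ENNReal.toReal_ofReal (by positivity)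

lemma my_expMeasure_neg : expMeasure 1 (Set.Iio 0) = 0 := by
  rw [expMeasure, gammaMeasure, withDensity_apply _ measurableSet_Iio]
  exact lintegral_gammaPDF_of_nonpos le_rfl

/-- In `K_n` with i.i.d. `Exp(1)` edge weights, let `F(a,b)` be the minimum over disjoint
vertex sets `A`, `B` with `|A| = a`, `|B| = b` of the total weight needed to connect each
vertex of `B` to some vertex of `A`.  Then
`Pr[F(a,b) < (1−δ)b²/(2na)] ≤ exp(a log(ne/a) − δ²b/8)`. -/
theorem no_cheap_sets
    {Ω : Type*} [MeasureSpace Ω] [IsProbabilityMeasure (ℙ : Measure Ω)]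
    (n : ℕ) (w : Ω → Sym2 (Fin n) → ℝ)
    (hmeas : ∀ e : Sym2 (Fin n), Measurable (fun ω => w ω e))
    (hindep : iIndepFun
      (fun e : {e : Sym2 (Fin n) // ¬ e.IsDiag} => fun ω => w ω e.1) ℙ)
    (hdist : ∀ e : {e : Sym2 (Fin n) // ¬ e.IsDiag},
      Measure.map (fun ω => w ω e.1) ℙ = expMeasure 1)
    (a b : ℕ) (δ : ℝ) (hδ : 0 < δ)
    (ha : 1 ≤ a) (han : a ≤ n) (hb : 1 ≤ b) (hbn : b ≤ n - a) :
    ℙ {ω | ∃ (A B : Finset (Fin n)) (hA : A.Nonempty),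
          A.card = a ∧ B.card = b ∧ Disjoint A B ∧
          (∑ x ∈ B, A.inf' hA (fun y => w ω s(x, y)))
            < (1 - δ) * (b : ℝ) ^ 2 / (2 * n * a)}
      ≤ ENNReal.ofReal
          (Real.exp (a * Real.log (n * Real.exp 1 / a) - δ ^ 2 * b / 8)) := by
  classical
  set ι := {e : Sym2 (Fin n) // ¬ e.IsDiag} with hι
  have ha' : (0:ℝ) < a := by exact_mod_cast ha
  have hb' : (0:ℝ) < b := by exact_mod_cast hb
  have hn' : (0:ℝ) < n := lt_of_lt_of_le ha' (by exact_mod_cast han)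
  set s : ℝ := b / (n * a) with hs_def
  have hs : 0 < s := by positivity
  set ν : ℝ := (b:ℝ)^2 / (2*n*a) with hν_def
  have hν : 0 < ν := by positivity
  have hbs : (b:ℝ) * s = 2 * ν := by rw [hs_def, hν_def]; field_simp
  set f : ℝ → ℝ := fun u => max 0 (min s (s - u)) with hf_def
  have hf_cont : Continuous f := by fun_prop
  have hf_nonneg : ∀ u, 0 ≤ f u := fun u => le_max_left _ _
  have hf_le : ∀ u, f u ≤ s := fun u => max_le hs.le (min_le_left _ _)
  have hf_ge : ∀ u, 0 ≤ u → s - u ≤ f u := by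
    intro u hu
    calc s - u ≤ min s (s - u) := le_min (by linarith) le_rfl
      _ ≤ f u := le_max_right _ _
  set Y : ι → Ω → ℝ := fun e ω => f (w ω e.1) with hY_def
  have hYmeas : ∀ e : ι, Measurable (Y e) := fun e => hf_cont.measurable.comp (hmeas e.1)
  have hY0 : ∀ (e : ι) ω, 0 ≤ Y e ω := fun e ω => hf_nonneg _
  have hYs : ∀ (e : ι) ω, Y e ω ≤ s := fun e ω => hf_le _
  -- the a.s. nonnegativity set
  set G : Set Ω := {ω | ∀ e : ι, 0 ≤ w ω e.1} with hG_def
  have hGc : ℙ Gᶜ = 0 := by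
    have hsub : Gᶜ ⊆ ⋃ e : ι, {ω | w ω e.1 < 0} := by
      intro ω hω
      simp only [hG_def, Set.mem_compl_iff, Set.mem_setOf_eq, not_forall] at hω
      obtain ⟨e, he⟩ := hω
      exact Set.mem_iUnion.mpr ⟨e, by simpa using lt_of_not_ge he⟩
    refine le_antisymm (le_trans (measure_mono hsub) ?_) zero_le
    refine le_trans (measure_iUnion_le _) ?_
    have : ∀ e : ι, ℙ {ω | w ω e.1 < 0} = 0 := by
      intro e
      have h1 : ℙ ((fun ω => w ω e.1) ⁻¹' (Set.Iio 0)) = 0 := by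
        rw [← Measure.map_apply (hmeas e.1) measurableSet_Iio, hdist e]
        exact my_expMeasure_neg
      exact h1
    simp [this]
  by_cases hδ1 : 1 ≤ δ
  · -- threshold nonpositive: event has probability zero
    have hsub : {ω | ∃ (A B : Finset (Fin n)) (hA : A.Nonempty),
          A.card = a ∧ B.card = b ∧ Disjoint A B ∧
          (∑ x ∈ B, A.inf' hA (fun y => w ω s(x, y)))
            < (1 - δ) * (b : ℝ) ^ 2 / (2 * n * a)} ⊆ Gᶜ := by
      intro ω hω
      obtain ⟨A, B, hA, hAcard, hBcard, hdisj, hsum⟩ := hω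
      by_contra hG'
      have hωG : ω ∈ G := Set.not_notMem.mp hG'
      have hpos : 0 ≤ ∑ x ∈ B, A.inf' hA (fun y => w ω s(x, y)) := by
        apply Finset.sum_nonneg
        intro x hx
        apply Finset.le_inf'
        intro y hy
        have hxy : x ≠ y := fun h => (Finset.disjoint_right.mp hdisj hx) (h ▸ hy)
        exact hωG ⟨s(x,y), by rwa [Sym2.mk_isDiag_iff]⟩
      have hneg : (1 - δ) * (b : ℝ) ^ 2 / (2 * n * a) ≤ 0 := by
        apply div_nonpos_of_nonpos_of_nonneg
        · nlinarith
        · positivity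
      linarith
    calc ℙ _ ≤ ℙ Gᶜ := measure_mono hsub
      _ = 0 := hGc
      _ ≤ _ := zero_le
  · push_neg at hδ1
    -- edge sets and sums
    have hedge : ∀ (A : Finset (Fin n)) (p : Fin n × Fin n), p ∈ Aᶜ ×ˢ A →
        ¬ (s(p.1, p.2) : Sym2 (Fin n)).IsDiag := by
      intro A p hp
      have hp' := Finset.mem_product.mp hp
      rw [Sym2.mk_isDiag_iff]
      intro hxy
      exact (Finset.mem_compl.mp hp'.1) (hxy ▸ hp'.2)
    set T : Finset (Fin n) → Finset ι := fun A =>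
      (Aᶜ ×ˢ A).attach.image (fun p => (⟨s(p.1.1, p.1.2), hedge A p.1 p.2⟩ : ι)) with hT_def
    set Z : Finset (Fin n) → Ω → ℝ := fun A ω => ∑ e ∈ T A, Y e ω with hZ_def
    have hTsum : ∀ (A : Finset (Fin n)) (ω : Ω),
        Z A ω = ∑ p ∈ Aᶜ ×ˢ A, f (w ω s(p.1, p.2)) := by
      intro A ω
      rw [hZ_def]
      simp only []
      rw [hT_def]
      simp only []
      rw [Finset.sum_image ?hinj]
      case hinj =>
        intro p hp q hq hpq
        have h1 : (s(p.1.1, p.1.2) : Sym2 (Fin n)) = s(q.1.1, q.1.2) := by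
          exact congrArg Subtype.val hpq
        rw [Sym2.eq_iff] at h1
        have hpm := Finset.mem_product.mp p.2
        have hqm := Finset.mem_product.mp q.2
        rcases h1 with ⟨h1, h2⟩ | ⟨h1, h2⟩
        · exact Subtype.ext (Prod.ext h1 h2)
        · exact absurd (h1 ▸ hqm.2) (Finset.mem_compl.mp hpm.1)
      rw [← Finset.sum_attach (Aᶜ ×ˢ A) (fun p => f (w ω s(p.1, p.2)))]
    have hTcard : ∀ A : Finset (Fin n), A.card = a → ((T A).card : ℝ) ≤ n * a := by
      intro A hAcard
      have h1 : (T A).card ≤ (Aᶜ ×ˢ A).card := le_trans Finset.card_image_le (by simp)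
      have h2 : (Aᶜ ×ˢ A).card = Aᶜ.card * A.card := Finset.card_product _ _
      have h3 : Aᶜ.card ≤ n := le_trans (Finset.card_le_univ _) (by simp)
      have : (T A).card ≤ n * a := by
        calc (T A).card ≤ Aᶜ.card * A.card := h1.trans h2.le
          _ ≤ n * a := by rw [hAcard]; exact Nat.mul_le_mul_right a h3
      exact_mod_cast this
    -- containment of the event in the union over A
    have hcont : ∀ ω, (∃ (A B : Finset (Fin n)) (hA : A.Nonempty),
          A.card = a ∧ B.card = b ∧ Disjoint A B ∧
          (∑ x ∈ B, A.inf' hA (fun y => w ω s(x, y)))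
            < (1 - δ) * (b : ℝ) ^ 2 / (2 * n * a)) → ω ∈ G →
        ∃ A ∈ Finset.powersetCard a (Finset.univ : Finset (Fin n)),
          (1+δ) * ν ≤ Z A ω := by
      intro ω hE hωG
      obtain ⟨A, B, hA, hAcard, hBcard, hdisj, hsum⟩ := hE
      refine ⟨A, Finset.mem_powersetCard.mpr ⟨Finset.subset_univ _, hAcard⟩, ?_⟩
      have key1 : ∀ x ∈ B, s - ∑ y ∈ A, f (w ω s(x, y))
          ≤ A.inf' hA (fun y => w ω s(x,y)) := by
        intro x hx
        obtain ⟨y0, hy0A, hy0⟩ := Finset.exists_mem_eq_inf' hA (fun y => w ω s(x,y))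
        have hxy : x ≠ y0 := fun h => (Finset.disjoint_right.mp hdisj hx) (h ▸ hy0A)
        have hw0 : 0 ≤ w ω s(x,y0) := hωG ⟨s(x,y0), by rwa [Sym2.mk_isDiag_iff]⟩
        have h1 : s - w ω s(x,y0) ≤ f (w ω s(x,y0)) := hf_ge _ hw0
        have h2 : f (w ω s(x,y0)) ≤ ∑ y ∈ A, f (w ω s(x,y)) :=
          Finset.single_le_sum (f := fun y => f (w ω s(x,y))) (fun y _ => hf_nonneg _) hy0A
        rw [hy0]; linarith
      have key2 : (b:ℝ) * s - ∑ x ∈ B, ∑ y ∈ A, f (w ω s(x,y))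
          ≤ ∑ x ∈ B, A.inf' hA (fun y => w ω s(x,y)) := by
        have h := Finset.sum_le_sum key1
        rw [Finset.sum_sub_distrib, Finset.sum_const, hBcard] at h
        have : (b : ℝ) * s = (b : ℕ) • s := by simp [nsmul_eq_mul]
        rw [this]
        exact h
      have key3 : ∑ x ∈ B, ∑ y ∈ A, f (w ω s(x,y))
          ≤ ∑ x ∈ Aᶜ, ∑ y ∈ A, f (w ω s(x,y)) := by
        apply Finset.sum_le_sum_of_subset_of_nonneg
        · intro x hx; exact Finset.mem_compl.mpr (Finset.disjoint_right.mp hdisj hx)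
        · intro x _ _; exact Finset.sum_nonneg fun y _ => hf_nonneg _
      have key4 : Z A ω = ∑ x ∈ Aᶜ, ∑ y ∈ A, f (w ω s(x,y)) := by
        rw [hTsum A ω, Finset.sum_product]
      have ht : (1 - δ) * (b : ℝ)^2 / (2 * (n:ℝ) * a) = (1 - δ) * ν := by
        rw [hν_def]; ring
      rw [ht] at hsum
      linarith
    -- per-A Chernoff bound
    have hperA : ∀ A ∈ Finset.powersetCard a (Finset.univ : Finset (Fin n)),
        ℙ {ω | (1+δ) * ν ≤ Z A ω} ≤ ENNReal.ofReal (Real.exp (-(δ^2 * b / 8))) := by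
      intro A hAmem
      have hAcard : A.card = a := (Finset.mem_powersetCard.mp hAmem).2
      set θ : ℝ := Real.log (1+δ) / s with hθ_def
      have hθ : 0 ≤ θ := div_nonneg (Real.log_nonneg (by linarith)) hs.le
      have hθs : θ * s = Real.log (1+δ) := div_mul_cancel₀ _ hs.ne'
      have hexpθs : Real.exp (θ * s) = 1 + δ := by rw [hθs, Real.exp_log (by linarith)]
      have hint : ∀ e : ι, Integrable (fun ω => Real.exp (θ * Y e ω)) ℙ := by
        intro e
        apply Integrable.mono' (integrable_const (Real.exp (θ * s)))
        · exact (((hYmeas e).const_mul θ).exp).aestronglyMeasurable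
        · filter_upwards with ω
          rw [Real.norm_eq_abs, abs_of_pos (Real.exp_pos _)]
          exact Real.exp_le_exp.mpr (mul_le_mul_of_nonneg_left (hYs e ω) hθ)
      have hintY : ∀ e : ι, Integrable (Y e) ℙ := by
        intro e
        apply Integrable.mono' (integrable_const s) (hYmeas e).aestronglyMeasurable
        filter_upwards with ω
        rw [Real.norm_eq_abs, abs_of_nonneg (hY0 e ω)]; exact hYs e ω
      have hEY : ∀ e : ι, ∫ ω, Y e ω ∂ℙ ≤ s^2/2 := by
        intro e
        have h1 : ∫ ω, Y e ω ∂ℙ = ∫ u, f u ∂(expMeasure 1) := by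
          rw [← hdist e, integral_map (hmeas e.1).aemeasurable hf_cont.aestronglyMeasurable]
        rw [h1]; exact my_integral_bound hs
      have hmgf : ∀ e : ι, mgf (Y e) ℙ θ ≤ Real.exp (δ * s / 2) := by
        intro e
        have h1 : mgf (Y e) ℙ θ ≤ ∫ ω, (1 + Y e ω * (δ / s)) ∂ℙ := by
          apply integral_mono (hint e)
          · exact (integrable_const 1).add ((hintY e).mul_const _)
          · intro ω
            have hcv := my_exp_convex (θ := θ) hs (hY0 e ω) (hYs e ω)
            rw [hexpθs] at hcv
            calc Real.exp (θ * Y e ω) ≤ 1 + (Y e ω / s) * (1 + δ - 1) := hcv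
              _ = 1 + Y e ω * (δ / s) := by ring
        have h2 : ∫ ω, (1 + Y e ω * (δ / s)) ∂ℙ = 1 + (∫ ω, Y e ω ∂ℙ) * (δ / s) := by
          rw [integral_add (integrable_const 1) ((hintY e).mul_const _), integral_const,
            integral_mul_const]
          simp [measure_univ]
        rw [h2] at h1
        have h3 : (∫ ω, Y e ω ∂ℙ) * (δ / s) ≤ (s^2/2) * (δ / s) :=
          mul_le_mul_of_nonneg_right (hEY e) (by positivity)
        have heq : (s^2/2) * (δ / s) = δ * s / 2 := by field_simp
        rw [heq] at h3
        have h4 := Real.add_one_le_exp (δ * s / 2)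
        linarith
      have hZ_eq : Z A = ∑ e ∈ T A, Y e := by
        funext ω
        rw [hZ_def]
        simp [Finset.sum_apply]
      have hindepY : iIndepFun Y ℙ :=
        hindep.comp (fun _ => f) (fun _ => hf_cont.measurable)
      have hmgfZ : mgf (Z A) ℙ θ ≤ Real.exp (δ * b / 2) := by
        rw [hZ_eq, hindepY.mgf_sum hYmeas]
        calc ∏ e ∈ T A, mgf (Y e) ℙ θ ≤ ∏ e ∈ T A, Real.exp (δ * s / 2) :=
              Finset.prod_le_prod (fun e _ => mgf_nonneg) (fun e _ => hmgf e)
          _ = Real.exp ((T A).card * (δ * s / 2)) := by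
              rw [Finset.prod_const, ← Real.exp_nat_mul]
          _ ≤ Real.exp (((n : ℝ) * a) * (δ * s / 2)) := by
              apply Real.exp_le_exp.mpr
              apply mul_le_mul_of_nonneg_right (hTcard A hAcard) (by positivity)
          _ = Real.exp (δ * b / 2) := by
              congr 1; rw [hs_def]; field_simp
      have hintZ : Integrable (fun ω => Real.exp (θ * Z A ω)) ℙ := by
        have hZmeas : Measurable fun ω => ∑ e ∈ T A, Y e ω :=
          Finset.measurable_sum _ (fun e _ => hYmeas e)
        apply Integrable.mono' (integrable_const (Real.exp (θ * ((T A).card * s))))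
        · exact ((hZmeas.const_mul θ).exp).aestronglyMeasurable
        · filter_upwards with ω
          rw [Real.norm_eq_abs, abs_of_pos (Real.exp_pos _)]
          apply Real.exp_le_exp.mpr
          apply mul_le_mul_of_nonneg_left _ hθ
          rw [hZ_def]
          calc ∑ e ∈ T A, Y e ω ≤ (T A).card • s :=
                Finset.sum_le_card_nsmul _ _ _ (fun e _ => hYs e ω)
            _ = (T A).card * s := by simp [nsmul_eq_mul]
      have hcher := measure_ge_le_exp_mul_mgf (X := Z A) (μ := ℙ) ((1+δ) * ν) hθ hintZ
      have hθν : θ * ν = Real.log (1+δ) * ((b:ℝ)/2) := by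
        rw [hθ_def, hν_def, hs_def]; field_simp
      have hfinal : Real.exp (-θ * ((1+δ)*ν)) * mgf (Z A) ℙ θ
          ≤ Real.exp (-(δ^2 * b / 8)) := by
        calc Real.exp (-θ * ((1+δ)*ν)) * mgf (Z A) ℙ θ
            ≤ Real.exp (-θ * ((1+δ)*ν)) * Real.exp (δ * b / 2) := by
              apply mul_le_mul_of_nonneg_left hmgfZ (Real.exp_pos _).le
          _ = Real.exp (δ * b / 2 - (1+δ) * (θ * ν)) := by
              rw [← Real.exp_add]; ring_nf
          _ ≤ Real.exp (-(δ^2 * b / 8)) := by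
              apply Real.exp_le_exp.mpr
              rw [hθν]
              have hh := my_h_lb hδ.le hδ1.le
              have hbpos : (0:ℝ) ≤ (b:ℝ)/2 := by positivity
              nlinarith [mul_le_mul_of_nonneg_left hh hbpos]
      have h1 : (ℙ {ω | (1+δ)*ν ≤ Z A ω}).toReal ≤ Real.exp (-(δ^2 * b / 8)) :=
        le_trans hcher hfinal
      rw [← ENNReal.ofReal_toReal (measure_ne_top ℙ {ω | (1+δ)*ν ≤ Z A ω})]
      exact ENNReal.ofReal_le_ofReal h1
    -- assemble
    calc ℙ {ω | ∃ (A B : Finset (Fin n)) (hA : A.Nonempty),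
          A.card = a ∧ B.card = b ∧ Disjoint A B ∧
          (∑ x ∈ B, A.inf' hA (fun y => w ω s(x, y)))
            < (1 - δ) * (b : ℝ) ^ 2 / (2 * n * a)}
        ≤ ℙ (({ω | ∃ (A B : Finset (Fin n)) (hA : A.Nonempty),
          A.card = a ∧ B.card = b ∧ Disjoint A B ∧
          (∑ x ∈ B, A.inf' hA (fun y => w ω s(x, y)))
            < (1 - δ) * (b : ℝ) ^ 2 / (2 * n * a)} ∩ G) ∪ Gᶜ) := by
          apply measure_mono
          intro ω hω
          by_cases hg : ω ∈ G
          · exact Or.inl ⟨hω, hg⟩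
          · exact Or.inr hg
      _ ≤ ℙ ({ω | ∃ (A B : Finset (Fin n)) (hA : A.Nonempty),
          A.card = a ∧ B.card = b ∧ Disjoint A B ∧
          (∑ x ∈ B, A.inf' hA (fun y => w ω s(x, y)))
            < (1 - δ) * (b : ℝ) ^ 2 / (2 * n * a)} ∩ G) + ℙ Gᶜ := measure_union_le _ _
      _ = ℙ ({ω | ∃ (A B : Finset (Fin n)) (hA : A.Nonempty),
          A.card = a ∧ B.card = b ∧ Disjoint A B ∧
          (∑ x ∈ B, A.inf' hA (fun y => w ω s(x, y)))
            < (1 - δ) * (b : ℝ) ^ 2 / (2 * n * a)} ∩ G) := by rw [hGc, add_zero]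
      _ ≤ ℙ (⋃ A ∈ Finset.powersetCard a (Finset.univ : Finset (Fin n)),
            {ω | (1+δ) * ν ≤ Z A ω}) := by
          apply measure_mono
          rintro ω ⟨hω, hg⟩
          obtain ⟨A, hAmem, hZA⟩ := hcont ω hω hg
          exact Set.mem_biUnion hAmem hZA
      _ ≤ ∑ A ∈ Finset.powersetCard a (Finset.univ : Finset (Fin n)),
            ℙ {ω | (1+δ) * ν ≤ Z A ω} := measure_biUnion_finset_le _ _
      _ ≤ ∑ A ∈ Finset.powersetCard a (Finset.univ : Finset (Fin n)),
            ENNReal.ofReal (Real.exp (-(δ^2 * b / 8))) := Finset.sum_le_sum hperA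
      _ = (Finset.powersetCard a (Finset.univ : Finset (Fin n))).card
            • ENNReal.ofReal (Real.exp (-(δ^2 * b / 8))) := by rw [Finset.sum_const]
      _ ≤ ENNReal.ofReal (Real.exp (a * Real.log (n * Real.exp 1 / a) - δ ^ 2 * b / 8)) := by
          rw [Finset.card_powersetCard, Finset.card_univ, Fintype.card_fin]
          rw [nsmul_eq_mul, ← ENNReal.ofReal_natCast (n.choose a),
            ← ENNReal.ofReal_mul (Nat.cast_nonneg _)]
          apply ENNReal.ofReal_le_ofReal
          calc (n.choose a : ℝ) * Real.exp (-(δ^2 * b / 8))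
              ≤ Real.exp (a * Real.log (n * Real.exp 1 / a)) * Real.exp (-(δ^2 * b / 8)) :=
                mul_le_mul_of_nonneg_right (my_choose_bound n a ha han) (Real.exp_pos _).le
            _ = Real.exp (a * Real.log (n * Real.exp 1 / a) - δ ^ 2 * b / 8) := by
                rw [← Real.exp_add]; ring_nf
end

section
/- Fix δ ∈ (0,1] and set C = 16/δ². Define R(a) = C·a·log(ne/a) for 1 ≤ a ≤ n. If b ≥ en / ((C log C)^{r−1} Γ(r)²) for some real r ≥ 2, then R^{-1}(b) ≥ en / ((C log C)^{r} Γ(r+1)²); equivalently, R(en / ((C log C)^{r} Γ(r+1)²)) ≤ en / ((C log C)^{r−1} Γ(r)²). -/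
private lemma log_succ_le (k : ℕ) : Real.log ((k:ℝ)+1) ≤ k := by
  have := Real.log_le_sub_one_of_pos (show (0:ℝ) < (k:ℝ)+1 by positivity)
  linarith

private lemma fact_bound : ∀ k : ℕ, 2 ≤ k →
    2 * Real.log (Nat.factorial k) ≤ 4 * Real.log 2 * ((k:ℝ) * ((k:ℝ) - 2)) + k := by
  intro k hk
  induction k, hk using Nat.le_induction with
  | base =>
      have h2 := Real.log_two_lt_d9
      norm_num [Nat.factorial]
      nlinarith
  | succ k hk ih =>
      have hfne : (Nat.factorial k : ℝ) ≠ 0 := Nat.cast_ne_zero.2 (Nat.factorial_ne_zero k)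
      have hfs : (Nat.factorial (k+1) : ℝ) = ((k:ℝ)+1) * Nat.factorial k := by
        push_cast [Nat.factorial_succ]; ring
      have hlog : Real.log (Nat.factorial (k+1)) =
          Real.log ((k:ℝ)+1) + Real.log (Nat.factorial k) := by
        rw [hfs, Real.log_mul (by positivity) hfne]
      have h1 : Real.log ((k:ℝ)+1) ≤ k := log_succ_le k
      have hk2 : (2:ℝ) ≤ k := by exact_mod_cast hk
      have hmul : (0.6931471803:ℝ) * (2*(k:ℝ)-1) ≤ Real.log 2 * (2*(k:ℝ)-1) :=
        mul_le_mul_of_nonneg_right Real.log_two_gt_d9.le (by linarith)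
      push_cast
      rw [hlog]
      nlinarith [ih]

private lemma slope_bound (k : ℕ) (hk : 2 ≤ k) :
    2 * Real.log ((k:ℝ)+1) ≤ 4 * Real.log 2 * (2*(k:ℝ)-2) + 1 := by
  have hk2 : (2:ℝ) ≤ k := by exact_mod_cast hk
  have hmul : (0.6931471803:ℝ) * (2*(k:ℝ)-2) ≤ Real.log 2 * (2*(k:ℝ)-2) :=
    mul_le_mul_of_nonneg_right Real.log_two_gt_d9.le (by linarith)
  nlinarith [log_succ_le k]

private lemma star (r : ℝ) (hr : 2 ≤ r) :
    2 * Real.log (Real.Gamma (r+1)) ≤ 4 * Real.log 2 * (r*(r-2)) + r := by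
  set k := ⌊r⌋₊ with hkdef
  have hk2 : 2 ≤ k := Nat.le_floor (by exact_mod_cast hr)
  have hkr : (k:ℝ) ≤ r := Nat.floor_le (by linarith)
  have hrk : r < (k:ℝ)+1 := Nat.lt_floor_add_one r
  have hk2' : (2:ℝ) ≤ k := by exact_mod_cast hk2
  have hconv := Real.convexOn_log_Gamma.2 (Set.mem_Ioi.2 (show (0:ℝ) < (k:ℝ)+1 by positivity))
    (Set.mem_Ioi.2 (show (0:ℝ) < (k:ℝ)+2 by positivity))
    (show (0:ℝ) ≤ (k:ℝ)+1-r by linarith) (show (0:ℝ) ≤ r-(k:ℝ) by linarith)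
    (show ((k:ℝ)+1-r) + (r-(k:ℝ)) = 1 by ring)
  simp only [smul_eq_mul, Function.comp_apply] at hconv
  have harg : ((k:ℝ)+1-r)*((k:ℝ)+1) + (r-(k:ℝ))*((k:ℝ)+2) = r+1 := by ring
  rw [harg] at hconv
  have hΓ1 : Real.Gamma ((k:ℝ)+1) = Nat.factorial k := by
    exact_mod_cast Real.Gamma_nat_eq_factorial k
  have hΓ2 : Real.Gamma ((k:ℝ)+2) = Nat.factorial (k+1) := by
    have h := Real.Gamma_nat_eq_factorial (k+1)
    push_cast at h
    rw [show (k:ℝ)+2 = (k:ℝ)+1+1 by ring, h]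
  rw [hΓ1, hΓ2] at hconv
  have hfne : (Nat.factorial k : ℝ) ≠ 0 := Nat.cast_ne_zero.2 (Nat.factorial_ne_zero k)
  have hsplit : Real.log (Nat.factorial (k+1)) =
      Real.log ((k:ℝ)+1) + Real.log (Nat.factorial k) := by
    rw [show ((Nat.factorial (k+1) : ℝ)) = ((k:ℝ)+1) * Nat.factorial k by
      push_cast [Nat.factorial_succ]; ring, Real.log_mul (by positivity) hfne]
  rw [hsplit] at hconv
  have hfk := fact_bound k hk2
  have hslope := slope_bound k hk2
  nlinarith [hconv, hfk, mul_le_mul_of_nonneg_left hslope (show (0:ℝ) ≤ r - k by linarith),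
    mul_nonneg (Real.log_nonneg one_le_two) (sq_nonneg (r - (k:ℝ)))]

/-- With `C = 16/δ²` and `R(a) = C·a·log(ne/a)`: the recursion step
`R(en/((C log C)^r Γ(r+1)²)) ≤ en/((C log C)^{r−1} Γ(r)²)` for real `r ≥ 2`
(this is the 'equivalent' inverse-free form of the statement that
`b ≥ en/((C log C)^{r−1} Γ(r)²)` implies `R⁻¹(b) ≥ en/((C log C)^r Γ(r+1)²)`). -/
theorem R_inverse_recursion (δ n : ℝ) (hδ0 : 0 < δ) (hδ1 : δ ≤ 1) (hn : 1 ≤ n)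
    (r : ℝ) (hr : 2 ≤ r) :
    (16 / δ ^ 2) *
        (Real.exp 1 * n /
          ((16 / δ ^ 2 * Real.log (16 / δ ^ 2)) ^ r * (Real.Gamma (r + 1)) ^ 2)) *
        Real.log (n * Real.exp 1 /
          (Real.exp 1 * n /
            ((16 / δ ^ 2 * Real.log (16 / δ ^ 2)) ^ r * (Real.Gamma (r + 1)) ^ 2)))
      ≤ Real.exp 1 * n /
          ((16 / δ ^ 2 * Real.log (16 / δ ^ 2)) ^ (r - 1) * (Real.Gamma r) ^ 2) := by
  have he : (0:ℝ) < Real.exp 1 := Real.exp_pos 1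
  have hn0 : (0:ℝ) < n := by linarith
  have hδ2 : (0:ℝ) < δ^2 := by positivity
  have hr0 : (0:ℝ) < r := by linarith
  set e := Real.exp 1 with hedef
  set C := 16/δ^2 with hCdef
  have hC : (16:ℝ) ≤ C := by
    rw [hCdef, le_div_iff₀ hδ2]; nlinarith
  have hC0 : (0:ℝ) < C := by linarith
  set L := Real.log C with hLdef
  have h16 : Real.log 16 = 4 * Real.log 2 := by
    rw [show (16:ℝ) = 2^4 by norm_num, Real.log_pow]; push_cast; ring
  have hL16 : 4*Real.log 2 ≤ L := by
    rw [← h16, hLdef]; exact Real.log_le_log (by norm_num) hC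
  have hl2 : (0:ℝ) < Real.log 2 := Real.log_pos one_lt_two
  have hL0 : (0:ℝ) < L := by linarith
  set g := Real.Gamma r with hgdef
  have hg : 0 < g := Real.Gamma_pos_of_pos hr0
  have hG : Real.Gamma (r+1) = r * g := Real.Gamma_add_one hr0.ne'
  have hCL : (0:ℝ) < C*L := mul_pos hC0 hL0
  have hP : (0:ℝ) < (C*L)^r := Real.rpow_pos_of_pos hCL r
  rw [hG]
  set M := (C*L)^r * (r*g)^2 with hMdef
  have hM : (0:ℝ) < M := mul_pos hP (pow_pos (mul_pos hr0 hg) 2)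
  have hinner : n * e / (e*n/M) = M := by
    field_simp
  rw [hinner]
  have hstar : 2 * Real.log (r*g) ≤ 4*Real.log 2 * (r*(r-2)) + r := by
    rw [← hG]; exact star r hr
  have hlogM : Real.log M ≤ L * r^2 := by
    have hlM : Real.log M = r * Real.log (C*L) + 2 * Real.log (r*g) := by
      rw [hMdef, Real.log_mul hP.ne' (by positivity), Real.log_rpow hCL, Real.log_pow]
      push_cast; ring
    have hlCL : Real.log (C*L) = L + Real.log L := by
      rw [Real.log_mul hC0.ne' hL0.ne', ← hLdef]
    have hlL : Real.log L ≤ L - 1 := Real.log_le_sub_one_of_pos hL0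
    have h24 : 4*Real.log 2 * (r*(r-2)) ≤ L * (r*(r-2)) :=
      mul_le_mul_of_nonneg_right hL16 (by nlinarith)
    rw [hlM, hlCL]
    nlinarith [hstar, h24, mul_le_mul_of_nonneg_left hlL hr0.le]
  calc C * (e*n/M) * Real.log M ≤ C * (e*n/M) * (L*r^2) :=
        mul_le_mul_of_nonneg_left hlogM (by positivity)
    _ = e*n/((C*L)^(r-1)*g^2) := by
        rw [Real.rpow_sub hCL, Real.rpow_one, hMdef]
        field_simp
end
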